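/- arXiv:2210.12281 — 2 statements merged into one kernel-verified Lean document; each statement's English description precedes it below -/
import Mathlib

section
/- Let F : (0,∞) → ℝ be twice continuously differentiable with F′(r) > 0 for all r > 0, and suppose there exists γ > 0 such that liminf_{r→0⁺} F″(r)/F′(r) ≥ γ. Then there exists a₀ > 0 such that for every a ∈ (0, a₀], setting c = 5/(3a⁵) and V(x) = F(3c(a² − x²)) for |x| < a, there exists ε ∈ (0, a/2) such that V″(x) > 0 for every x with a − ε ≤ |x| < a. -/
set_option maxHeartbeats 1000000

open Set Filter

theorem second_derivative_of_V_positive_near_endpoints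
    (F : ℝ → ℝ) (hF : ContDiffOn ℝ 2 F (Ioi 0))
    (hF' : ∀ r : ℝ, 0 < r → 0 < deriv F r)
    (γ : ℝ) (hγ : 0 < γ)
    (hliminf : γ ≤ liminf (fun r => deriv (deriv F) r / deriv F r) (nhdsWithin 0 (Ioi 0))) :
    ∃ a₀ : ℝ, 0 < a₀ ∧ ∀ a : ℝ, 0 < a → a ≤ a₀ →
      ∃ ε : ℝ, 0 < ε ∧ ε < a / 2 ∧
        ∀ x : ℝ, a - ε ≤ |x| → |x| < a →
          0 < deriv (deriv (fun z : ℝ => F (3 * (5 / (3 * a ^ 5)) * (a ^ 2 - z ^ 2)))) x := by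
  -- Step 1: eventually γ/2 < F''/F' near 0⁺
  have hev : ∀ᶠ r in nhdsWithin 0 (Ioi 0),
      γ / 2 < deriv (deriv F) r / deriv F r := by
    have hlt : γ / 2 < liminf (fun r => deriv (deriv F) r / deriv F r)
        (nhdsWithin 0 (Ioi 0)) := lt_of_lt_of_le (by linarith) hliminf
    rw [Filter.liminf_eq] at hlt
    set S := {b : ℝ | ∀ᶠ r in nhdsWithin 0 (Ioi (0:ℝ)),
      b ≤ deriv (deriv F) r / deriv F r} with hS
    by_cases hB : BddAbove S
    · rcases S.eq_empty_or_nonempty with hSe | hSn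
      · rw [hSe, Real.sSup_empty] at hlt; linarith
      · obtain ⟨b, hbS, hgb⟩ := exists_lt_of_lt_csSup hSn hlt
        have hbS' : ∀ᶠ r in nhdsWithin 0 (Ioi (0:ℝ)),
            b ≤ deriv (deriv F) r / deriv F r := hbS
        exact hbS'.mono fun r hr => hgb.trans_le hr
    · obtain ⟨b, hbS, hgb⟩ := not_bddAbove_iff.mp hB (γ / 2)
      have hbS' : ∀ᶠ r in nhdsWithin 0 (Ioi (0:ℝ)),
          b ≤ deriv (deriv F) r / deriv F r := hbS
      exact hbS'.mono fun r hr => hgb.trans_le hr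
  obtain ⟨δ, hδ, hδ'⟩ := Metric.mem_nhdsWithin_iff.mp hev
  have hδ'' : ∀ u : ℝ, 0 < u → u < δ → γ / 2 < deriv (deriv F) u / deriv F u := by
    intro u hu huδ
    exact hδ' ⟨by simpa [Real.dist_eq, abs_of_pos hu] using huδ, hu⟩
  -- second derivative of F is defined on Ioi 0
  have hF2 : ContDiffOn ℝ 1 (deriv F) (Ioi 0) := by
    have := hF.deriv_of_isOpen isOpen_Ioi (m := 1) (by norm_num)
    exact this
  refine ⟨min 1 γ, by positivity, ?_⟩
  intro a ha haa
  set k : ℝ := 3 * (5 / (3 * a ^ 5)) with hkdef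
  have hk : k = 5 / a ^ 5 := by rw [hkdef]; field_simp
  have hk0 : 0 < k := by rw [hk]; positivity
  refine ⟨min (a / 4) (δ * a ^ 4 / 20), by positivity, ?_, ?_⟩
  · calc min (a / 4) (δ * a ^ 4 / 20) ≤ a / 4 := min_le_left _ _
      _ < a / 2 := by linarith
  intro x hx1 hx2
  set ε : ℝ := min (a / 4) (δ * a ^ 4 / 20) with hεdef
  have hε4 : ε ≤ a / 4 := min_le_left _ _
  have hεδ : ε ≤ δ * a ^ 4 / 20 := min_le_right _ _
  have hxlb : a / 2 < |x| := by linarith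
  have hx0 : x ≠ 0 := by
    intro h; rw [h, abs_zero] at hxlb; linarith
  -- basic facts about u := k * (a^2 - x^2)
  have hxx : x ^ 2 = |x| ^ 2 := (sq_abs x).symm
  have hu0 : 0 < k * (a ^ 2 - x ^ 2) := by
    apply mul_pos hk0
    have : |x| ^ 2 < a ^ 2 := by nlinarith [abs_nonneg x]
    nlinarith
  have huδ : k * (a ^ 2 - x ^ 2) < δ := by
    rw [hk]
    have h1 : a ^ 2 - x ^ 2 = (a - |x|) * (a + |x|) := by rw [hxx]; ring
    have h2 : a - |x| ≤ ε := by linarith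
    have h3 : a + |x| ≤ 2 * a := by linarith
    have h4 : (5 / a ^ 5) * (a ^ 2 - x ^ 2) ≤ (5 / a ^ 5) * (ε * (2 * a)) := by
      apply mul_le_mul_of_nonneg_left _ (by positivity)
      rw [h1]
      have : (0:ℝ) ≤ a - |x| := by linarith
      nlinarith [abs_nonneg x]
    have h5 : (5 / a ^ 5) * (ε * (2 * a)) = 10 * ε / a ^ 4 := by
      field_simp; ring
    have h6 : 10 * ε / a ^ 4 ≤ δ / 2 := by
      rw [div_le_div_iff₀ (by positivity) (by norm_num)]
      nlinarith
    linarith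
  -- derivatives
  have hgder : ∀ z : ℝ, HasDerivAt (fun z : ℝ => k * (a ^ 2 - z ^ 2)) (k * (-(2 * z))) z := by
    intro z
    have h := ((hasDerivAt_pow 2 z).const_sub (a ^ 2)).const_mul k
    simpa using h
  have hVder : ∀ z ∈ Ioo (-a) a,
      HasDerivAt (fun z : ℝ => F (k * (a ^ 2 - z ^ 2)))
        (deriv F (k * (a ^ 2 - z ^ 2)) * (k * (-(2 * z)))) z := by
    intro z hz
    have hz0 : 0 < k * (a ^ 2 - z ^ 2) := by
      apply mul_pos hk0
      have := hz.1; have := hz.2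
      nlinarith
    have hFc : ContDiffAt ℝ 2 F (k * (a ^ 2 - z ^ 2)) :=
      hF.contDiffAt (isOpen_Ioi.mem_nhds hz0)
    have hFd : DifferentiableAt ℝ F (k * (a ^ 2 - z ^ 2)) :=
      hFc.differentiableAt (by norm_num)
    exact hFd.hasDerivAt.comp z (hgder z)
  have hxmem : x ∈ Ioo (-a) a := by
    constructor <;> [nlinarith [abs_nonneg x, neg_abs_le x, le_abs_self x];
      nlinarith [neg_abs_le x, le_abs_self x]]
  have hderiv1 : deriv (fun z : ℝ => F (k * (a ^ 2 - z ^ 2)))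
      =ᶠ[nhds x] fun z => deriv F (k * (a ^ 2 - z ^ 2)) * (k * (-(2 * z))) := by
    filter_upwards [isOpen_Ioo.mem_nhds hxmem] with z hz
    exact (hVder z hz).deriv
  -- derivative of the derivative
  have hdF : DifferentiableAt ℝ (deriv F) (k * (a ^ 2 - x ^ 2)) :=
    (hF2.differentiableOn (by norm_num)).differentiableAt (isOpen_Ioi.mem_nhds hu0)
  have hcomp : HasDerivAt (fun z : ℝ => deriv F (k * (a ^ 2 - z ^ 2)))
      (deriv (deriv F) (k * (a ^ 2 - x ^ 2)) * (k * (-(2 * x)))) x :=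
    by have h := hdF.hasDerivAt.comp x (hgder x); exact h
  have hlin : HasDerivAt (fun z : ℝ => k * (-(2 * z))) (k * (-2)) x := by
    have h := ((hasDerivAt_id x).const_mul (2:ℝ)).neg.const_mul k
    simpa using h
  have hprod : HasDerivAt
      (fun z : ℝ => deriv F (k * (a ^ 2 - z ^ 2)) * (k * (-(2 * z))))
      (deriv (deriv F) (k * (a ^ 2 - x ^ 2)) * (k * (-(2 * x))) * (k * (-(2 * x)))
        + deriv F (k * (a ^ 2 - x ^ 2)) * (k * (-2))) x := hcomp.mul hlin
  have hD2 : deriv (deriv (fun z : ℝ => F (k * (a ^ 2 - z ^ 2)))) x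
      = deriv (deriv F) (k * (a ^ 2 - x ^ 2)) * (k * (-(2 * x))) * (k * (-(2 * x)))
        + deriv F (k * (a ^ 2 - x ^ 2)) * (k * (-2)) := by
    rw [hderiv1.deriv_eq]
    exact hprod.deriv
  -- the inequality
  have hp : 0 < deriv F (k * (a ^ 2 - x ^ 2)) := hF' _ hu0
  have hq : γ / 2 < deriv (deriv F) (k * (a ^ 2 - x ^ 2)) / deriv F (k * (a ^ 2 - x ^ 2)) :=
    hδ'' _ hu0 huδ
  have hq' : γ / 2 * deriv F (k * (a ^ 2 - x ^ 2)) < deriv (deriv F) (k * (a ^ 2 - x ^ 2)) :=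
    (lt_div_iff₀ hp).mp hq
  have hkx : 1 ≤ γ * k * x ^ 2 := by
    have ha1 : a ≤ 1 := le_trans haa (min_le_left _ _)
    have haγ : a ≤ γ := le_trans haa (min_le_right _ _)
    have hx2sq : a ^ 2 / 4 ≤ x ^ 2 := by rw [hxx]; nlinarith
    rw [hk]
    have h1 : (1:ℝ) ≤ γ * (5 / a ^ 5) * (a ^ 2 / 4) := by
      rw [show γ * (5 / a ^ 5) * (a ^ 2 / 4) = 5 * γ / (4 * a ^ 3) by field_simp,
        le_div_iff₀ (by positivity)]
      nlinarith
    calc (1:ℝ) ≤ γ * (5 / a ^ 5) * (a ^ 2 / 4) := h1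
      _ ≤ γ * (5 / a ^ 5) * x ^ 2 := by
          apply mul_le_mul_of_nonneg_left hx2sq (by positivity)
  show 0 < deriv (deriv (fun z : ℝ => F (k * (a ^ 2 - z ^ 2)))) x
  rw [hD2]
  have H : ∀ p q : ℝ, 0 < p → γ / 2 * p < q → 1 ≤ γ * k * x ^ 2 →
      0 < q * (k * -(2 * x)) * (k * -(2 * x)) + p * (k * -2) := by
    intro p q hp hq hkx
    nlinarith [mul_lt_mul_of_pos_left hq (show (0:ℝ) < 4 * k ^ 2 * x ^ 2 by positivity),
      mul_le_mul_of_nonneg_left hkx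
        (mul_nonneg (mul_nonneg (by norm_num : (0:ℝ) ≤ 2) hk0.le) hp.le),
      mul_pos hk0 hp]
  exact H _ _ hp hq' hkx
end

section
/- Let F : (0,∞) → ℝ be twice continuously differentiable with F′(r) > 0 for all r > 0, and suppose there exists γ > 0 such that liminf_{r→0⁺} F″(r)/F′(r) ≥ γ. Then there exist a > 0 and real numbers x₀, x₁ with 0 < x₀ < x₁ < a such that, setting c = 5/(3a⁵) and V(x) = F(3c(a² − x²)), one has (V(x₀) + V(x₁))/2 > V((x₀ + x₁)/2). -/
open Set Filter

theorem aux_second_deriv_pos (k γ x D1 D2 : ℝ) (hk : 0 < k) (hx : 0 < x) (h1 : 0 < D1)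
    (h2 : γ / 2 * D1 < D2) (h3 : 1 < k * γ * x ^ 2) :
    0 < D2 * (k * (-(2 * x))) * (k * (-(2 * x))) + D1 * (k * (-2)) := by
  have h4 : 0 < 4 * k ^ 2 * x ^ 2 := by positivity
  nlinarith [mul_lt_mul_of_pos_left h2 h4,
    mul_lt_mul_of_pos_left h3 (by positivity : 0 < 2 * k * D1)]

set_option maxHeartbeats 2000000 in
theorem V_midpoint_convexity_violated
    (F : ℝ → ℝ) (hF : ContDiffOn ℝ 2 F (Ioi 0))
    (hF' : ∀ r : ℝ, 0 < r → 0 < deriv F r)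
    (γ : ℝ) (hγ : 0 < γ)
    (hliminf : γ ≤ liminf (fun r => deriv (deriv F) r / deriv F r) (nhdsWithin 0 (Ioi 0))) :
    ∃ a x₀ x₁ : ℝ, 0 < a ∧ 0 < x₀ ∧ x₀ < x₁ ∧ x₁ < a ∧
      (F (3 * (5 / (3 * a ^ 5)) * (a ^ 2 - x₀ ^ 2)) +
        F (3 * (5 / (3 * a ^ 5)) * (a ^ 2 - x₁ ^ 2))) / 2 >
      F (3 * (5 / (3 * a ^ 5)) * (a ^ 2 - ((x₀ + x₁) / 2) ^ 2)) := by
  set u : ℝ → ℝ := fun r => deriv (deriv F) r / deriv F r with hu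
  -- the function is eventually bounded below along the filter
  have hbdd : IsBoundedUnder (· ≥ ·) (nhdsWithin 0 (Ioi 0)) u := by
    by_contra h
    have hempty : {b : ℝ | ∀ᶠ r in nhdsWithin 0 (Ioi 0), b ≤ u r} = ∅ := by
      ext b
      simp only [mem_setOf_eq, mem_empty_iff_false, iff_false]
      intro hb
      exact h ⟨b, eventually_map.2 hb⟩
    have : liminf u (nhdsWithin 0 (Ioi 0)) = 0 := by
      rw [liminf_eq, hempty, Real.sSup_empty]
    rw [this] at hliminf
    linarith
  have hev : ∀ᶠ r in nhdsWithin 0 (Ioi 0), γ / 2 < u r :=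
    eventually_lt_of_lt_liminf (lt_of_lt_of_le (by linarith) hliminf) hbdd
  -- extract δ
  obtain ⟨δ, hδpos, hδ⟩ : ∃ δ > 0, ∀ r : ℝ, 0 < r → r < δ → γ / 2 < u r := by
    rw [eventually_nhdsWithin_iff, Metric.eventually_nhds_iff] at hev
    obtain ⟨ε, hε, h⟩ := hev
    exact ⟨ε, hε, fun r hr hrδ =>
      h (by simpa [Real.dist_eq, abs_of_pos hr] using hrδ) hr⟩
  -- key consequence: F'' r > (γ/2) * F' r for 0 < r < δ
  have hkey : ∀ r : ℝ, 0 < r → r < δ → γ / 2 * deriv F r < deriv (deriv F) r := by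
    intro r hr hrδ
    have := hδ r hr hrδ
    rw [hu] at this
    exact (lt_div_iff₀ (hF' r hr)).1 this
  clear hδ hbdd hev hliminf hu
  clear_value u
  clear u
  -- choose a
  obtain ⟨a, ha, ha1, haγ⟩ : ∃ a : ℝ, 0 < a ∧ a ≤ 1 ∧ a ≤ γ :=
    ⟨min 1 γ, lt_min one_pos hγ, min_le_left _ _, min_le_right _ _⟩
  have ha3 : a ^ 3 ≤ γ := by
    have h2 : a ^ 2 ≤ 1 := by nlinarith
    nlinarith
  set k : ℝ := 3 * (5 / (3 * a ^ 5)) with hk_def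
  have hk : k = 5 / a ^ 5 := by
    rw [hk_def]; field_simp
  clear hk_def
  clear_value k
  have hkpos : 0 < k := by rw [hk]; positivity
  obtain ⟨ε, hεpos, hεδ, hεa⟩ : ∃ ε : ℝ, 0 < ε ∧ ε ≤ δ * a ^ 5 / 5 ∧ ε ≤ a ^ 2 / 2 :=
    ⟨min (δ * a ^ 5 / 5) (a ^ 2 / 2), lt_min (by positivity) (by positivity),
      min_le_left _ _, min_le_right _ _⟩
  have hab : 0 < a ^ 2 - ε := by nlinarith
  obtain ⟨b, hbpos, hb2⟩ : ∃ b : ℝ, 0 < b ∧ b ^ 2 = a ^ 2 - ε :=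
    ⟨Real.sqrt (a ^ 2 - ε), Real.sqrt_pos.2 hab, Real.sq_sqrt hab.le⟩
  have hba : b < a := by nlinarith
  -- key facts for x ∈ Ioo b a
  have harg : ∀ x ∈ Ioo b a, 0 < k * (a ^ 2 - x ^ 2) ∧ k * (a ^ 2 - x ^ 2) < δ := by
    intro x hx
    obtain ⟨hx1, hx2⟩ := hx
    have hxpos : 0 < x := hbpos.trans hx1
    have hx2sq : x ^ 2 < a ^ 2 := by nlinarith
    have hx1sq : a ^ 2 - ε < x ^ 2 := by nlinarith
    refine ⟨mul_pos hkpos (by nlinarith), ?_⟩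
    rw [hk, div_mul_eq_mul_div, div_lt_iff₀ (by positivity)]
    nlinarith
  have hcoef : ∀ x ∈ Ioo b a, 1 < k * γ * x ^ 2 := by
    intro x hx
    obtain ⟨hx1, hx2⟩ := hx
    have hxpos : 0 < x := hbpos.trans hx1
    have hx1sq : a ^ 2 - ε < x ^ 2 := by nlinarith
    have h5 : (0:ℝ) < a ^ 5 := by positivity
    rw [hk, div_mul_eq_mul_div, div_mul_eq_mul_div, lt_div_iff₀ h5]
    have hx2' : a ^ 2 / 2 ≤ x ^ 2 := by nlinarith
    nlinarith [mul_le_mul ha3 hx2' (by positivity : (0:ℝ) ≤ a ^ 2 / 2) hγ.le,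
      mul_pos hγ (mul_pos hxpos hxpos)]
  -- differentiability of F and deriv F on Ioi 0
  have hFd : DifferentiableOn ℝ F (Ioi 0) := hF.differentiableOn (by norm_num)
  have hF1 : ContDiffOn ℝ 1 (deriv F) (Ioi 0) := hF.deriv_of_isOpen isOpen_Ioi (by norm_num)
  have hF'd : DifferentiableOn ℝ (deriv F) (Ioi 0) := hF1.differentiableOn (by norm_num)
  let V : ℝ → ℝ := fun x => F (k * (a ^ 2 - x ^ 2))
  have hg : ∀ x : ℝ, HasDerivAt (fun x : ℝ => k * (a ^ 2 - x ^ 2)) (k * (-(2 * x))) x := by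
    intro x
    have h1 : HasDerivAt (fun x : ℝ => x ^ 2) (2 * x) x := by
      simpa using hasDerivAt_pow 2 x
    have h2 := (h1.const_sub (a ^ 2)).const_mul k
    simpa using h2
  have hV' : ∀ x ∈ Ioo b a,
      HasDerivAt V (deriv F (k * (a ^ 2 - x ^ 2)) * (k * (-(2 * x)))) x := by
    intro x hx
    have hmem : k * (a ^ 2 - x ^ 2) ∈ Ioi (0:ℝ) := (harg x hx).1
    have hFu : DifferentiableAt ℝ F (k * (a ^ 2 - x ^ 2)) :=
      hFd.differentiableAt (isOpen_Ioi.mem_nhds hmem)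
    exact hFu.hasDerivAt.comp x (hg x)
  let W : ℝ → ℝ := fun x => deriv F (k * (a ^ 2 - x ^ 2)) * (k * (-(2 * x)))
  have hVW : ∀ x ∈ Ioo b a, deriv V x = W x := fun x hx => (hV' x hx).deriv
  have hW' : ∀ x ∈ Ioo b a, HasDerivAt W
      (deriv (deriv F) (k * (a ^ 2 - x ^ 2)) * (k * (-(2 * x))) * (k * (-(2 * x)))
        + deriv F (k * (a ^ 2 - x ^ 2)) * (k * (-2))) x := by
    intro x hx
    have hmem : k * (a ^ 2 - x ^ 2) ∈ Ioi (0:ℝ) := (harg x hx).1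
    have hF'u : DifferentiableAt ℝ (deriv F) (k * (a ^ 2 - x ^ 2)) :=
      hF'd.differentiableAt (isOpen_Ioi.mem_nhds hmem)
    have h1 : HasDerivAt (fun x => deriv F (k * (a ^ 2 - x ^ 2)))
        (deriv (deriv F) (k * (a ^ 2 - x ^ 2)) * (k * (-(2 * x)))) x :=
      by have := hF'u.hasDerivAt.comp x (hg x); exact this
    have h2 : HasDerivAt (fun x : ℝ => k * (-(2 * x))) (k * (-2)) x := by
      simpa using (((hasDerivAt_id x).const_mul (2:ℝ)).neg.const_mul k)
    exact h1.mul h2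
  have hpos : ∀ x ∈ Ioo b a, 0 < deriv (deriv V) x := by
    intro x hx
    have hEq : deriv V =ᶠ[nhds x] W :=
      eventually_of_mem (isOpen_Ioo.mem_nhds hx) hVW
    rw [hEq.deriv_eq, (hW' x hx).deriv]
    have hmem : 0 < k * (a ^ 2 - x ^ 2) := (harg x hx).1
    have hd1pos : 0 < deriv F (k * (a ^ 2 - x ^ 2)) := hF' _ hmem
    have hd2big := hkey _ hmem (harg x hx).2
    have hc := hcoef x hx
    have hxpos : 0 < x := hbpos.trans hx.1
    exact aux_second_deriv_pos k γ x _ _ hkpos hxpos hd1pos hd2big hc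
  have hVcont : ContinuousOn V (Ioo b a) := fun x hx =>
    ((hV' x hx).differentiableAt.continuousAt).continuousWithinAt
  have hconv : StrictConvexOn ℝ (Ioo b a) V := by
    refine strictConvexOn_of_deriv2_pos (convex_Ioo b a) hVcont ?_
    intro x hx
    rw [interior_Ioo] at hx
    exact hpos x hx
  clear hpos hVcont hVW hW' hV' hg harg hcoef hkey hFd hF1 hF'd hδpos hεδ hεa hab
  clear W δ hεpos hb2 ε
  refine ⟨a, (2*b+a)/3, (b+2*a)/3, ha, by linarith, by linarith, by linarith, ?_⟩
  have hk2 : 3 * (5 / (3 * a ^ 5)) = k := by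
    rw [hk]; field_simp
  rw [hk2]
  have hx₀ : (2*b+a)/3 ∈ Ioo b a := ⟨by linarith, by linarith⟩
  have hx₁ : (b+2*a)/3 ∈ Ioo b a := ⟨by linarith, by linarith⟩
  have hne : (2*b+a)/3 ≠ (b+2*a)/3 := fun h => hba.ne (by linarith)
  have h := hconv.2 hx₀ hx₁ hne (by norm_num : (0:ℝ) < 1/2) (by norm_num : (0:ℝ) < 1/2)
    (by norm_num)
  simp only [smul_eq_mul] at h
  have hmid : (1:ℝ)/2 * ((2*b+a)/3) + 1/2 * ((b+2*a)/3) = ((2*b+a)/3 + (b+2*a)/3)/2 := by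
    ring
  rw [hmid] at h
  show (V ((2*b+a)/3) + V ((b+2*a)/3)) / 2 > V (((2*b+a)/3 + (b+2*a)/3)/2)
  linarith
end
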